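/- arXiv:2007.15368 — 3 statements merged into one kernel-verified Lean document; each statement's English description precedes it below -/
import Mathlib

section
/- Let G be a connected k-regular finite simple graph with k ≤ 5. Then es_χ(G) = 1 if and only if G is isomorphic to K_2, or G is an odd cycle, or χ(G) > 3 and c*(G) = 1. -/
open Function

/-- The chromatic-stability index: the minimum number of edges whose removal
decreases the chromatic number (0 if no such edge set exists, e.g. for edgeless graphs). -/
noncomputable def esChi {V : Type*} [Fintype V] (G : SimpleGraph V) : ℕ :=
  sInf {k | ∃ F : Finset (Sym2 V),
    ↑F ⊆ G.edgeSet ∧ F.card = k ∧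
    (G.deleteEdges ↑F).chromaticNumber < G.chromaticNumber}

open scoped Classical in
/-- The color class of color `i` under the coloring `c`, as a `Finset`. -/
noncomputable def classOf {V : Type*} [Fintype V] {G : SimpleGraph V} {α : Type*}
    (c : G.Coloring α) (i : α) : Finset V :=
  Finset.univ.filter fun v => c v = i

open scoped Classical in
/-- The number of edges of `G` with one endpoint in `A` and the other in `B`
(for disjoint `A`, `B`). -/
noncomputable def eCC {V : Type*} [Fintype V] (G : SimpleGraph V) (A B : Finset V) : ℕ :=
  ((A ×ˢ B).filter fun p => G.Adj p.1 p.2).card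

/-- `c*`: the minimum size of a color class over all proper colorings of `G`
using exactly `χ(G)` colors. -/
noncomputable def cStar {V : Type*} [Fintype V] (G : SimpleGraph V) : ℕ :=
  sInf {k | ∃ (c : G.Coloring (Fin G.chromaticNumber.toNat))
      (i : Fin G.chromaticNumber.toNat),
    Surjective c ∧ k = (classOf c i).card}

/-- The chromatic bondage number: the minimum number of edges between two distinct
color classes, over all proper colorings of `G` using exactly `χ(G)` colors. -/
noncomputable def rhoChi {V : Type*} [Fintype V] (G : SimpleGraph V) : ℕ :=
  sInf {k | ∃ (c : G.Coloring (Fin G.chromaticNumber.toNat))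
      (i j : Fin G.chromaticNumber.toNat),
    Surjective c ∧ i ≠ j ∧ k = eCC G (classOf c i) (classOf c j)}

/-!
Deleting an edge `uv` lowers `χ` by at most one. If it does, every `(χ - 1)`-colouring of
`G - uv` gives `u` and `v` the same colour, so giving `v` a fresh colour yields a `χ`-colouring
in which `{v}` is a colour class; this is `c* = 1`. If `χ = 2`, then `G - uv` is edgeless and
`G = K₂`. If `χ = 3`, a signed count of the edges of the bipartite graph `G - uv` shows `k ∣ 2`;
`G` is not a forest, and a cycle in it is all of `G` because both are `2`-regular, so `G` is a
cycle, odd because `χ = 3`.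

Conversely, let `{v}` be a colour class of a `χ`-colouring with `χ ≥ 4`. Every other colour
occurs around `v` (else recolour `v`), and since `k ≤ 5 < 2 (χ - 1)` one of them occurs exactly
once, at `w`. In `G - vw` the vertex `v` can take that colour, which leaves `χ - 1` colours.
Deleting an edge of `K₂` or of an odd cycle leaves an edgeless graph or a path.
-/

theorem Nat.sInf_eq_one_iff_of_zero_notMem {s : Set ℕ} (h : 0 ∉ s) : sInf s = 1 ↔ 1 ∈ s := by
  refine ⟨fun hs => ?_, fun hs => le_antisymm (Nat.sInf_le hs) ?_⟩
  · have hne : s.Nonempty := Set.nonempty_iff_ne_empty.mpr fun he => by simp [he] at hs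
    exact hs ▸ Nat.sInf_mem hne
  · exact Nat.one_le_iff_ne_zero.mpr fun h0 => by simp_all [Nat.sInf_eq_zero]

namespace SimpleGraph

variable {V : Type*} {G : SimpleGraph V} {k : ℕ}

theorem natCast_chromaticNumber_toNat [Finite V] (G : SimpleGraph V) :
    (G.chromaticNumber.toNat : ℕ∞) = G.chromaticNumber :=
  ENat.natCast_toNat <|
    chromaticNumber_ne_top_iff_exists.mpr ⟨_, G.colorable_chromaticNumber_of_fintype⟩

def HasCriticalEdge (G : SimpleGraph V) : Prop :=
  ∃ e ∈ G.edgeSet, (G.deleteEdges {e}).chromaticNumber < G.chromaticNumber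

theorem esChi_eq_one_iff_hasCriticalEdge [Fintype V] : esChi G = 1 ↔ G.HasCriticalEdge := by
  rw [esChi, Nat.sInf_eq_one_iff_of_zero_notMem (by simp)]
  constructor
  · rintro ⟨F, hF, hcard, hlt⟩
    obtain ⟨e, rfl⟩ := Finset.card_eq_one.mp hcard
    exact ⟨e, hF (by simp), by simpa using hlt⟩
  · rintro ⟨e, he, hlt⟩
    exact ⟨{e}, by simpa using he, by simp, by simpa using hlt⟩

@[simp]
theorem mem_classOf [Fintype V] {α : Type*} (c : G.Coloring α) (i : α) (w : V) :
    w ∈ classOf c i ↔ c w = i := by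
  simp [classOf]

theorem cStar_eq_one_iff [Fintype V] :
    cStar G = 1 ↔ ∃ (c : G.Coloring (Fin G.chromaticNumber.toNat)) (i : Fin _) (v : V),
      ∀ w, c w = i ↔ w = v := by
  have hsurj : ∀ c : G.Coloring (Fin G.chromaticNumber.toNat), Surjective c :=
    (chromaticNumber_eq_iff_forall_surjective G.colorable_chromaticNumber_of_fintype).mp
      G.natCast_chromaticNumber_toNat.symm
  rw [cStar, Nat.sInf_eq_one_iff_of_zero_notMem]
  · simp only [Set.mem_ofPred_eq, eq_comm (a := 1), Finset.card_eq_one, Finset.ext_iff,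
      mem_classOf, Finset.mem_singleton]
    exact ⟨fun ⟨c, i, _, v, hv⟩ => ⟨c, i, v, hv⟩, fun ⟨c, i, v, hv⟩ => ⟨c, i, hsurj c, v, hv⟩⟩
  · rintro ⟨c, i, -, h0⟩
    obtain ⟨w, hw⟩ := hsurj c i
    exact Finset.card_ne_zero_of_mem ((mem_classOf c i w).mpr hw) h0.symm

theorem cStar_eq_one_of_coloring [Fintype V] {α : Type*} [Fintype α] (c : G.Coloring α)
    (hχ : G.chromaticNumber = Fintype.card α) {i : α} {v : V} (hv : ∀ w, c w = i ↔ w = v) :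
    cStar G = 1 := by
  let e : α ≃ Fin G.chromaticNumber.toNat := Fintype.equivFinOfCardEq (by simp [hχ])
  exact cStar_eq_one_iff.mpr ⟨G.recolorOfEquiv e c, e i, v, by simpa using hv⟩

section DeleteEdge

variable {α : Type*} {u v : V}

def Coloring.ofDeleteEdgeOfNe (c : (G.deleteEdges {s(u, v)}).Coloring α) (h : c u ≠ c v) :
    G.Coloring α :=
  Coloring.mk c fun {a b} hab => by
    by_cases he : s(a, b) = s(u, v)
    · rcases Sym2.eq_iff.mp he with ⟨rfl, rfl⟩ | ⟨rfl, rfl⟩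
      exacts [h, h.symm]
    · exact c.valid (deleteEdges_adj.mpr ⟨hab, he⟩)

def Coloring.extendDeleteEdge [DecidableEq V] (c : (G.deleteEdges {s(u, v)}).Coloring α) :
    G.Coloring (Option α) :=
  Coloring.mk (fun w => if w = v then none else some (c w)) fun {a b} hab => by
    by_cases ha : a = v <;> by_cases hb : b = v
    · exact absurd (ha.trans hb.symm) hab.ne
    all_goals simp only [ha, hb, if_true, if_false, ne_eq, reduceCtorEq, not_false_eq_true,
      Option.some.injEq]
    refine c.valid (deleteEdges_adj.mpr ⟨hab, fun he => ?_⟩)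
    rcases Sym2.eq_iff.mp he with ⟨-, rfl⟩ | ⟨rfl, -⟩
    exacts [hb rfl, ha rfl]

theorem Coloring.extendDeleteEdge_eq_none_iff [DecidableEq V]
    (c : (G.deleteEdges {s(u, v)}).Coloring α) (w : V) : c.extendDeleteEdge w = none ↔ w = v := by
  by_cases hw : w = v <;> simp [extendDeleteEdge, Coloring.mk, hw]

theorem exists_coloring_deleteEdges_of_chromaticNumber_lt [Finite V]
    (hlt : (G.deleteEdges {s(u, v)}).chromaticNumber < G.chromaticNumber) :
    ∃ m : ℕ, G.chromaticNumber = m + 1 ∧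
      ∃ c : (G.deleteEdges {s(u, v)}).Coloring (Fin m), c u = c v := by
  classical
  set H := G.deleteEdges {s(u, v)}
  set m := H.chromaticNumber.toNat
  obtain ⟨c⟩ : H.Colorable m := H.colorable_chromaticNumber_of_fintype
  have hG : ¬ G.Colorable m := fun hG =>
    (hG.chromaticNumber_le.trans (ENat.natCast_toNat_le_self _)).not_gt hlt
  have huv : c u = c v := by_contra fun h => hG ⟨c.ofDeleteEdgeOfNe h⟩
  have hG' : G.Colorable (m + 1) := by
    simpa using c.extendDeleteEdge.colorable
  exact ⟨m, chromaticNumber_eq_iff_colorable_not_colorable.mpr ⟨hG', hG⟩, c, huv⟩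

end DeleteEdge

section SingletonClass

variable {α : Type*} [Fintype α] [DecidableEq α] {i j : α} {v : V}

theorem colorable_card_sub_one_of_recolor [DecidableEq V] {H : SimpleGraph V} (hHG : H ≤ G)
    (c : G.Coloring α) (hv : ∀ w, c w = i → w = v) (hji : j ≠ i)
    (hj : ∀ w, H.Adj v w → c w ≠ j) : H.Colorable (Fintype.card α - 1) := by
  have hne : ∀ w, update c v j w ≠ i := fun w => by
    by_cases hw : w = v
    · simpa [hw] using hji
    · simpa [hw] using mt (hv w) hw
  let d : H.Coloring {a // a ≠ i} := Coloring.mk (fun w => ⟨update c v j w, hne w⟩)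
    fun {a b} hab => by
      rw [ne_eq, Subtype.mk.injEq]
      by_cases ha : a = v <;> by_cases hb : b = v
      · exact absurd (ha.trans hb.symm) hab.ne
      · subst ha; simpa [hb] using (hj b hab).symm
      · subst hb; simpa [ha] using hj a hab.symm
      · simpa [ha, hb] using c.valid (hHG hab)
  simpa using d.colorable

theorem hasCriticalEdge_of_singleton_colorClass [Fintype V] [DecidableRel G.Adj]
    (c : G.Coloring α) (hχ : G.chromaticNumber = Fintype.card α) (hv : ∀ w, c w = i ↔ w = v)
    (hdeg : G.degree v < 2 * (Fintype.card α - 1)) : G.HasCriticalEdge := by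
  classical
  have hfewer : (Fintype.card α - 1 : ℕ) < G.chromaticNumber := by
    rw [hχ, Nat.cast_lt]
    exact Nat.sub_one_lt (Fintype.card_pos_iff.mpr ⟨i⟩).ne'
  have hnotcol : ¬ G.Colorable (Fintype.card α - 1) := fun h =>
    h.chromaticNumber_le.not_gt hfewer
  set N := G.neighborFinset v
  have hseen : ∀ j ≠ i, ∃ w ∈ N, c w = j := fun j hji => by
    by_contra! h
    exact hnotcol (colorable_card_sub_one_of_recolor le_rfl c (fun w => (hv w).mp) hji
      fun w hw => h w ((mem_neighborFinset G v w).mpr hw))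
  obtain ⟨j, hj, hlt⟩ := Finset.exists_card_fiber_lt_of_card_lt_mul (s := N)
    (t := Finset.univ.erase i) (f := c) (n := 2)
    (by rwa [Finset.card_erase_of_mem (Finset.mem_univ _), Finset.card_univ, mul_comm])
  have hji : j ≠ i := Finset.ne_of_mem_erase hj
  obtain ⟨w, hwN, hwj⟩ := hseen j hji
  have hunique : ∀ x ∈ N, c x = j → x = w := fun x hx hxj =>
    Finset.card_le_one.mp (Nat.le_of_lt_succ hlt) x (by simp [hx, hxj]) w (by simp [hwN, hwj])
  refine ⟨s(v, w), (mem_neighborFinset G v w).mp hwN, ?_⟩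
  have hcol : (G.deleteEdges {s(v, w)}).Colorable (Fintype.card α - 1) :=
    colorable_card_sub_one_of_recolor (deleteEdges_le _) c (fun w => (hv w).mp) hji
    fun x hx hxj => (deleteEdges_adj.mp hx).2 (by
      rw [hunique x ((mem_neighborFinset G v x).mpr (deleteEdges_adj.mp hx).1) hxj]; rfl)
  exact hcol.chromaticNumber_le.trans_lt hfewer

theorem hasCriticalEdge_of_cStar_eq_one [Fintype V] [DecidableRel G.Adj]
    (hreg : G.IsRegularOfDegree k) (hk : k ≤ 5) (h3 : 3 < G.chromaticNumber)
    (hc : cStar G = 1) : G.HasCriticalEdge := by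
  obtain ⟨c, i, v, hv⟩ := cStar_eq_one_iff.mp hc
  rw [← natCast_chromaticNumber_toNat] at h3
  refine hasCriticalEdge_of_singleton_colorClass c
    (by simp [natCast_chromaticNumber_toNat]) hv ?_
  rw [hreg v, Fintype.card_fin]
  have : 3 < G.chromaticNumber.toNat := by exact_mod_cast h3
  omega

end SingletonClass

theorem HasCriticalEdge.of_iso {W : Type*} {G' : SimpleGraph W} (φ : G ≃g G')
    (h : G'.HasCriticalEdge) : G.HasCriticalEdge := by
  obtain ⟨e, he, hlt⟩ := h
  induction e using Sym2.ind with | _ x y => ?_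
  refine ⟨s(φ.symm x, φ.symm y), φ.symm.map_adj_iff.mpr he, ?_⟩
  let f : G.deleteEdges {s(φ.symm x, φ.symm y)} →g G'.deleteEdges {s(x, y)} :=
    ⟨φ, fun {a b} hab => by
      obtain ⟨hab, hne⟩ := deleteEdges_adj.mp hab
      refine deleteEdges_adj.mpr ⟨φ.map_adj_iff.mpr hab, fun he => hne ?_⟩
      rcases Sym2.eq_iff.mp he with ⟨rfl, rfl⟩ | ⟨rfl, rfl⟩ <;> simp [Sym2.eq_swap]⟩
  calc _ ≤ (G'.deleteEdges {s(x, y)}).chromaticNumber := chromaticNumber_mono_of_hom f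
    _ < G'.chromaticNumber := hlt
    _ = G.chromaticNumber := (chromaticNumber_congr φ).symm

theorem hasCriticalEdge_top_fin_two : (⊤ : SimpleGraph (Fin 2)).HasCriticalEdge := by
  refine ⟨s(0, 1), by simp, ?_⟩
  have hbot : (⊤ : SimpleGraph (Fin 2)).deleteEdges {s(0, 1)} = ⊥ := by
    ext a b
    fin_cases a <;> fin_cases b <;> simp [Sym2.eq_swap]
  simp [hbot, chromaticNumber_bot]

theorem cycleGraph_deleteEdges_le_pathGraph (m : ℕ) :
    (cycleGraph (m + 2)).deleteEdges {s(Fin.last (m + 1), 0)} ≤ pathGraph (m + 2) := by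
  suffices h : ∀ a b : Fin (m + 2), a = b + 1 → s(a, b) ≠ s(Fin.last (m + 1), 0) →
      (pathGraph (m + 2)).Adj a b by
    intro a b hab
    obtain ⟨hab, hne⟩ := deleteEdges_adj.mp hab
    rcases cycleGraph_adj.mp hab with hab | hab
    · exact h a b (sub_eq_iff_eq_add'.mp hab) hne
    · exact (h b a (sub_eq_iff_eq_add'.mp hab) (by rwa [Sym2.eq_swap])).symm
  rintro a b rfl hne
  rw [pathGraph_adj, Fin.val_add_one]
  split_ifs with hb
  · simp [hb] at hne
  · exact Or.inr rfl

theorem hasCriticalEdge_cycleGraph_of_odd {n : ℕ} (hn : 3 ≤ n) (hodd : Odd n) :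
    (cycleGraph n).HasCriticalEdge := by
  obtain ⟨m, rfl⟩ : ∃ m, n = m + 2 := ⟨n - 2, by omega⟩
  refine ⟨s(Fin.last (m + 1), 0), by simp [cycleGraph_adj], ?_⟩
  calc _ ≤ (pathGraph (m + 2)).chromaticNumber :=
        chromaticNumber_mono _ (cycleGraph_deleteEdges_le_pathGraph m)
    _ = 2 := chromaticNumber_pathGraph _ le_add_self
    _ < 3 := by norm_num
    _ = (cycleGraph (m + 2)).chromaticNumber :=
        (chromaticNumber_cycleGraph_of_odd _ le_add_self hodd).symm

section RegularCopy

variable {W : Type*} [Fintype V] [Fintype W] {H : SimpleGraph W} [DecidableRel G.Adj]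
  [DecidableRel H.Adj]

theorem Copy.map_neighborFinset_eq (f : Copy H G) (hH : H.IsRegularOfDegree k)
    (hG : G.IsRegularOfDegree k) (a : W) :
    (H.neighborFinset a).map f.toEmbedding = G.neighborFinset (f a) := by
  refine Finset.eq_of_subset_of_card_le (fun x hx => ?_) (by simp [hH a, hG (f a)])
  obtain ⟨b, hb, rfl⟩ := Finset.mem_map.mp hx
  exact (mem_neighborFinset _ _ _).mpr (f.toHom.map_adj ((mem_neighborFinset _ _ _).mp hb))

theorem Copy.surjective_of_isRegularOfDegree [Nonempty W] (f : Copy H G)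
    (hH : H.IsRegularOfDegree k) (hG : G.IsRegularOfDegree k) (hconn : G.Connected) :
    Surjective f := by
  intro y
  by_contra hy
  obtain ⟨a⟩ := ‹Nonempty W›
  obtain ⟨p⟩ := hconn.preconnected (f a) y
  obtain ⟨d, -, ⟨b, hb⟩, hd⟩ :=
    p.exists_boundary_dart (Set.range f) ⟨a, rfl⟩ (by simpa using hy)
  have : d.snd ∈ G.neighborFinset (f b) := (mem_neighborFinset _ _ _).mpr (hb ▸ d.adj)
  rw [← f.map_neighborFinset_eq hH hG] at this
  obtain ⟨c, -, hc⟩ := Finset.mem_map.mp this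
  exact hd ⟨c, hc⟩

theorem Copy.nonempty_iso_of_isRegularOfDegree [Nonempty W] (f : Copy H G)
    (hH : H.IsRegularOfDegree k) (hG : G.IsRegularOfDegree k) (hconn : G.Connected) :
    Nonempty (H ≃g G) := by
  refine ⟨⟨Equiv.ofBijective f ⟨f.injective, f.surjective_of_isRegularOfDegree hH hG hconn⟩,
    fun {a b} => ⟨fun hab => ?_, f.toHom.map_adj⟩⟩⟩
  have : f b ∈ G.neighborFinset (f a) := (mem_neighborFinset _ _ _).mpr hab
  rw [← f.map_neighborFinset_eq hH hG] at this
  obtain ⟨c, hc, hcb⟩ := Finset.mem_map.mp this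
  rwa [← f.injective hcb, ← mem_neighborFinset]

end RegularCopy

theorem sum_dart_fst [Fintype V] [DecidableRel G.Adj] {M : Type*} [AddCommMonoid M]
    (f : V → M) : ∑ d : G.Dart, f d.fst = ∑ v, G.degree v • f v := by
  classical
  rw [← Finset.sum_fiberwise Finset.univ (·.fst)]
  refine Finset.sum_congr rfl fun v _ => ?_
  rw [Finset.sum_congr rfl fun d hd => congrArg f (Finset.mem_filter.mp hd).2, Finset.sum_const]
  congr 1
  convert dart_fst_fiber_card_eq_degree G v

theorem IsRegularOfDegree.dvd_two_of_coloring_deleteEdges [Fintype V] [DecidableRel G.Adj]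
    (hreg : G.IsRegularOfDegree k) {u v : V} (huv : G.Adj u v)
    (c : (G.deleteEdges {s(u, v)}).Coloring (Fin 2)) (hc : c u = c v) : k ∣ 2 := by
  classical
  -- `σ` is `±1` on the two colour classes, so `σ x + σ y` vanishes along every edge of `G - uv`
  let σ : V → ℤ := fun w => if c w = c u then 1 else -1
  have hdart : ∀ d : G.Dart, σ d.fst + σ d.snd = if d.edge = s(u, v) then 2 else 0 := by
    rintro ⟨⟨a, b⟩, hab⟩
    simp only [Dart.edge_mk, Sym2.eq_iff]
    split_ifs with he
    · rcases he with ⟨rfl, rfl⟩ | ⟨rfl, rfl⟩ <;> simp [σ, hc]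
    · have key : ∀ x y z : Fin 2, x ≠ y →
          ((if x = z then 1 else -1 : ℤ) + if y = z then 1 else -1) = 0 := by decide
      exact key _ _ _ (c.valid (deleteEdges_adj.mpr ⟨hab, by simpa using he⟩))
  have hsnd : ∑ d : G.Dart, σ d.snd = ∑ d : G.Dart, σ d.fst :=
    Fintype.sum_equiv (Dart.symm_involutive.toPerm _) _ _ fun _ => rfl
  have hcount : (2 * k : ℤ) * ∑ w, σ w = 4 := by
    calc (2 * k : ℤ) * ∑ w, σ w = ∑ d : G.Dart, (σ d.fst + σ d.snd) := by
          rw [Finset.sum_add_distrib, hsnd, sum_dart_fst, two_mul, add_mul, Finset.mul_sum]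
          simp [hreg _]
      _ = 4 := by
          simp only [hdart, Finset.sum_ite, Finset.sum_const_zero, Finset.sum_const, add_zero,
            dart_edge_fiber_card _ _ (G.mem_edgeSet.mpr huv)]
          norm_num
  exact Int.natCast_dvd_natCast.mp ⟨∑ w, σ w, by push_cast; linarith⟩

theorem nonempty_iso_top_of_deleteEdges_eq_bot [Fintype V] [DecidableRel G.Adj]
    (hconn : G.Connected) (hreg : G.IsRegularOfDegree k) {u v : V} (huv : G.Adj u v)
    (hbot : G.deleteEdges {s(u, v)} = ⊥) : Nonempty (G ≃g (⊤ : SimpleGraph (Fin 2))) := by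
  have hnbr : G.neighborFinset u = {v} := by
    ext w
    refine ⟨fun hw => Finset.mem_singleton.mpr (by_contra fun hwv => ?_), fun hw => ?_⟩
    · have : (G.deleteEdges {s(u, v)}).Adj u w :=
        deleteEdges_adj.mpr ⟨(mem_neighborFinset _ _ _).mp hw, by simpa [huv.ne] using hwv⟩
      simp [hbot] at this
    · rwa [Finset.mem_singleton.mp hw, mem_neighborFinset]
  have hk : k = 1 := by rw [← hreg u, degree, hnbr, Finset.card_singleton]
  obtain ⟨f⟩ : (⊤ : SimpleGraph (Fin 2)) ⊑ G :=
    (not_cliqueFree_iff_top_isContained 2).mp <|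
      cliqueFree_two.not.mpr (ne_bot_iff_exists_adj.mpr ⟨u, v, huv⟩)
  obtain ⟨φ⟩ := f.nonempty_iso_of_isRegularOfDegree (k := 1) (by simpa using
    (IsRegularOfDegree.top : (⊤ : SimpleGraph (Fin 2)).IsRegularOfDegree _)) (hk ▸ hreg) hconn
  exact ⟨φ.symm⟩

theorem exists_iso_cycleGraph_of_chromaticNumber_eq_three [Fintype V] [DecidableRel G.Adj]
    (hconn : G.Connected) (hreg : G.IsRegularOfDegree k) (hk : k ∣ 2)
    (hχ : G.chromaticNumber = 3) : ∃ n, Odd n ∧ 3 ≤ n ∧ Nonempty (G ≃g cycleGraph n) := by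
  have hcyclic : ¬ G.IsAcyclic := fun h => by
    have := h.colorable_two.chromaticNumber_le
    rw [hχ] at this
    norm_num at this
  obtain ⟨v, p, hp⟩ : ∃ v, ∃ p : G.Walk v v, p.IsCycle := by
    simpa [IsAcyclic] using hcyclic
  obtain ⟨m, hm⟩ : ∃ m, p.length = m + 3 := ⟨p.length - 3, by have := hp.three_le_length; omega⟩
  obtain ⟨f⟩ : cycleGraph (m + 3) ⊑ G :=
    (cycleGraph_isContained_iff (by omega)).mpr ⟨v, p, hp, hm⟩
  have hcyc : (cycleGraph (m + 3)).IsRegularOfDegree 2 := fun _ => cycleGraph_degree_three_le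
  have hk2 : k = 2 := le_antisymm (Nat.le_of_dvd two_pos hk)
    ((hcyc 0).symm.trans_le ((f.degree_le 0).trans_eq (hreg _)))
  obtain ⟨φ⟩ := f.nonempty_iso_of_isRegularOfDegree hcyc (hk2 ▸ hreg) hconn
  refine ⟨m + 3, Nat.not_even_iff_odd.mp fun heven => ?_, by omega, ⟨φ.symm⟩⟩
  have := (chromaticNumber_congr φ).trans hχ
  rw [chromaticNumber_cycleGraph_of_even _ (by omega) heven] at this
  norm_num at this

theorem HasCriticalEdge.nonempty_iso_top_or_odd_cycle_or_cStar_eq_one [Fintype V]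
    [DecidableRel G.Adj] (h : G.HasCriticalEdge) (hconn : G.Connected)
    (hreg : G.IsRegularOfDegree k) :
    Nonempty (G ≃g (⊤ : SimpleGraph (Fin 2))) ∨
      (∃ n, Odd n ∧ 3 ≤ n ∧ Nonempty (G ≃g cycleGraph n)) ∨
      (3 < G.chromaticNumber ∧ cStar G = 1) := by
  classical
  obtain ⟨e, he, hlt⟩ := h
  induction e using Sym2.ind with | _ u v => ?_
  obtain ⟨m, hm, c, hc⟩ := exists_coloring_deleteEdges_of_chromaticNumber_lt hlt
  rcases m with _ | _ | _ | m
  · exact (c u).elim0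
  · exact .inl <|
      nonempty_iso_top_of_deleteEdges_eq_bot hconn hreg he (colorable_one_iff.mp ⟨c⟩)
  · exact .inr <| .inl <| exists_iso_cycleGraph_of_chromaticNumber_eq_three hconn hreg
      (hreg.dvd_two_of_coloring_deleteEdges he c hc) (by rw [hm]; rfl)
  · refine .inr <| .inr ⟨by rw [hm]; exact_mod_cast (by omega : 3 < m + 3 + 1), ?_⟩
    exact cStar_eq_one_of_coloring c.extendDeleteEdge (by simp [hm])
      c.extendDeleteEdge_eq_none_iff

end SimpleGraph

open scoped Classical in
/-- For a connected `k`-regular graph with `k ≤ 5`: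
`es_χ(G) = 1` iff `G ≅ K₂`, or `G` is an odd cycle, or `χ(G) > 3` and `c*(G) = 1`. -/
theorem esChi_eq_one_regular {V : Type*} [Fintype V] (G : SimpleGraph V) (k : ℕ)
    (hk : k ≤ 5) (hconn : G.Connected) (hreg : G.IsRegularOfDegree k) :
    esChi G = 1 ↔
      (Nonempty (G ≃g (⊤ : SimpleGraph (Fin 2))) ∨
       (∃ n : ℕ, Odd n ∧ 3 ≤ n ∧ Nonempty (G ≃g SimpleGraph.cycleGraph n)) ∨
       (3 < G.chromaticNumber ∧ cStar G = 1)) := by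
  rw [SimpleGraph.esChi_eq_one_iff_hasCriticalEdge]
  refine ⟨fun h => h.nonempty_iso_top_or_odd_cycle_or_cStar_eq_one hconn hreg, ?_⟩
  rintro (⟨⟨φ⟩⟩ | ⟨n, hodd, hn, ⟨φ⟩⟩ | ⟨h3, hc⟩)
  · exact SimpleGraph.hasCriticalEdge_top_fin_two.of_iso φ
  · exact (SimpleGraph.hasCriticalEdge_cycleGraph_of_odd hn hodd).of_iso φ
  · exact SimpleGraph.hasCriticalEdge_of_cStar_eq_one hreg hk h3 hc
end

section
/- For each r ∈ {6, 8, 10} there exists a connected r-regular finite simple graph G with χ(G) = 4 and es_χ(G) = 1. -/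
open Function

/-!
Take `K_{m+1,m,m}`, add an edge `{0, 1}` inside the part of size `m + 1` and remove a perfect
matching of the other `2m + 2` vertices; the result is `2m`-regular. The added edge lies in a
4-clique and the graph is 4-colourable (give `0` a colour of its own), while deleting the added
edge leaves a subgraph of `K_{m+1,m,m}`, which is 3-colourable. So `χ = 4` and one edge deletion
lowers it; `m = 3, 4, 5` give `r = 6, 8, 10`.
-/

open SimpleGraph

section

variable {V : Type*} {G : SimpleGraph V}

theorem esChi_eq_one_of_chromaticNumber_deleteEdges_lt [Fintype V] {e : Sym2 V}
    (he : e ∈ G.edgeSet) (h : (G.deleteEdges {e}).chromaticNumber < G.chromaticNumber) :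
    esChi G = 1 := by
  set S := {k | ∃ F : Finset (Sym2 V), ↑F ⊆ G.edgeSet ∧ F.card = k ∧
    (G.deleteEdges ↑F).chromaticNumber < G.chromaticNumber}
  have one_mem : 1 ∈ S := ⟨{e}, by simpa using he, Finset.card_singleton e, by simpa using h⟩
  have zero_not_mem : 0 ∉ S := by
    rintro ⟨F, -, hF, hlt⟩
    rw [Finset.card_eq_zero.1 hF, Finset.coe_empty, deleteEdges_empty] at hlt
    exact hlt.false
  refine le_antisymm (Nat.sInf_le one_mem) (Nat.one_le_iff_ne_zero.2 fun h0 => ?_)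
  exact zero_not_mem (h0 ▸ Nat.sInf_mem ⟨1, one_mem⟩)

theorem chromaticNumber_eq_of_isNClique_of_colorable {n : ℕ} {s : Finset V}
    (hs : G.IsNClique (n + 1) s) (hc : G.Colorable (n + 1)) :
    G.chromaticNumber = (n + 1 : ℕ) := by
  rw [Nat.cast_add_one, chromaticNumber_eq_iff_colorable_not_colorable]
  exact ⟨hc, fun hn => hn.cliqueFree n.lt_succ_self s hs⟩

theorem esChi_eq_one_of_colorable_deleteEdges [Fintype V] {n : ℕ} {e : Sym2 V}
    (hχ : G.chromaticNumber = (n + 1 : ℕ)) (he : e ∈ G.edgeSet)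
    (hc : (G.deleteEdges {e}).Colorable n) : esChi G = 1 := by
  refine esChi_eq_one_of_chromaticNumber_deleteEdges_lt he ?_
  rw [hχ]
  exact hc.chromaticNumber_le.trans_lt (by exact_mod_cast n.lt_succ_self)

theorem SimpleGraph.IsRegularOfDegree.congr_locallyFinite {inst₁ inst₂ : G.LocallyFinite} {d : ℕ}
    (h : @IsRegularOfDegree V G inst₁ d) : @IsRegularOfDegree V G inst₂ d := by
  convert h

end

def tripartIndex (m v : ℕ) : ℕ := if v ≤ m then 0 else if v ≤ 2 * m then 1 else 2

theorem tripartIndex_cases (m v : ℕ) : (v ≤ m ∧ tripartIndex m v = 0) ∨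
    (m < v ∧ v ≤ 2 * m ∧ tripartIndex m v = 1) ∨ (2 * m < v ∧ tripartIndex m v = 2) := by
  unfold tripartIndex
  split_ifs <;> omega

def IsMatchedPair (m u v : ℕ) : Prop :=
  (u = 0 ∧ v = m + 1) ∨ (u = 1 ∧ v = 2 * m + 1) ∨ (m + 2 ≤ u ∧ u ≤ 2 * m ∧ v = u + m)

def AlmostTripartiteRel (m u v : ℕ) : Prop :=
  (u = 0 ∧ v = 1) ∨ (tripartIndex m u < tripartIndex m v ∧ ¬IsMatchedPair m u v)

instance (m u v : ℕ) : Decidable (AlmostTripartiteRel m u v) := by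
  unfold AlmostTripartiteRel IsMatchedPair; infer_instance

/-- `K_{m+1,m,m}` on the parts `[0, m]`, `[m+1, 2m]`, `[2m+1, 3m]`, plus the edge `{0, 1}` inside
the first part, minus the perfect matching `IsMatchedPair m` of the vertices outside `[2, m]`. -/
def almostTripartiteGraph (m : ℕ) : SimpleGraph (Fin (3 * m + 1)) :=
  fromRel fun u v => AlmostTripartiteRel m u v

instance (m : ℕ) : DecidableRel (almostTripartiteGraph m).Adj := fun _ _ =>
  decidable_of_iff' _ (fromRel_adj ..)

namespace almostTripartiteGraph

variable {m : ℕ}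

theorem adj_iff {u v : Fin (3 * m + 1)} : (almostTripartiteGraph m).Adj u v ↔
    u.val ≠ v.val ∧ (AlmostTripartiteRel m u v ∨ AlmostTripartiteRel m v u) := by
  rw [almostTripartiteGraph, fromRel_adj, Fin.val_ne_iff]

theorem connected (hm : 2 ≤ m) : (almostTripartiteGraph m).Connected := by
  rw [connected_iff_exists_forall_reachable]
  refine ⟨⟨2, by omega⟩, fun v => ?_⟩
  have := tripartIndex_cases m 2
  have := tripartIndex_cases m (3 * m)
  have hub {w : Fin (3 * m + 1)} (hw : m < w.val) :
      (almostTripartiteGraph m).Adj ⟨2, by omega⟩ w := by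
    have := tripartIndex_cases m w
    simp only [adj_iff, AlmostTripartiteRel, IsMatchedPair]
    omega
  by_cases hv : m < v.val
  · exact (hub hv).reachable
  · have hvw : (almostTripartiteGraph m).Adj v ⟨3 * m, by omega⟩ := by
      have := tripartIndex_cases m v
      simp only [adj_iff, AlmostTripartiteRel, IsMatchedPair]
      omega
    exact (hub (show m < 3 * m by omega)).reachable.trans hvw.symm.reachable

theorem isRegularOfDegree (hm : m ∈ ({3, 4, 5} : Finset ℕ)) :
    (almostTripartiteGraph m).IsRegularOfDegree (2 * m) := by
  simp only [Finset.mem_insert, Finset.mem_singleton] at hm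
  unfold IsRegularOfDegree
  rcases hm with rfl | rfl | rfl <;> decide

theorem colorable_four : (almostTripartiteGraph m).Colorable 4 := by
  rw [colorable_iff_exists_bdd_nat_coloring]
  refine ⟨Coloring.mk (fun v => if v.val = 0 then 3 else tripartIndex m v) fun {u v} h => ?_,
    fun v => ?_⟩
  · have := tripartIndex_cases m u
    have := tripartIndex_cases m v
    simp only [adj_iff, AlmostTripartiteRel, IsMatchedPair] at h
    split_ifs <;> omega
  · have := tripartIndex_cases m v
    simp only [Coloring.mk, RelHom.coeFn_mk]
    split_ifs <;> omega

theorem adj_zero_one (hm : 1 ≤ m) :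
    (almostTripartiteGraph m).Adj ⟨0, by omega⟩ ⟨1, by omega⟩ := by
  simp [adj_iff, AlmostTripartiteRel]

theorem colorable_three_deleteEdges (hm : 1 ≤ m) :
    ((almostTripartiteGraph m).deleteEdges {s(⟨0, by omega⟩, ⟨1, by omega⟩)}).Colorable 3 := by
  rw [colorable_iff_exists_bdd_nat_coloring]
  refine ⟨Coloring.mk (fun v => tripartIndex m v) fun {u v} h => ?_, fun v => ?_⟩
  · have := tripartIndex_cases m u
    have := tripartIndex_cases m v
    simp only [deleteEdges_adj, Set.mem_singleton_iff, Sym2.eq_iff, Fin.ext_iff, adj_iff,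
      AlmostTripartiteRel, IsMatchedPair] at h
    omega
  · have := tripartIndex_cases m v
    simp only [Coloring.mk, RelHom.coeFn_mk]
    omega

theorem isNClique_four (hm : 3 ≤ m) : (almostTripartiteGraph m).IsNClique 4
    {⟨0, by omega⟩, ⟨1, by omega⟩, ⟨m + 2, by omega⟩, ⟨2 * m + 3, by omega⟩} := by
  have := tripartIndex_cases m 0
  have := tripartIndex_cases m 1
  have := tripartIndex_cases m (m + 2)
  have := tripartIndex_cases m (2 * m + 3)
  refine (is3Clique_triple_iff.2 ⟨?_, ?_, ?_⟩).insert ?_ <;>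
  simp only [Finset.mem_insert, Finset.mem_singleton, forall_eq_or_imp, forall_eq, adj_iff,
    AlmostTripartiteRel, IsMatchedPair, true_and, and_true, true_or] <;>
  omega

theorem chromaticNumber_eq_four (hm : 3 ≤ m) : (almostTripartiteGraph m).chromaticNumber = 4 :=
  chromaticNumber_eq_of_isNClique_of_colorable (isNClique_four hm) colorable_four

theorem esChi_eq_one (hm : 3 ≤ m) : esChi (almostTripartiteGraph m) = 1 :=
  esChi_eq_one_of_colorable_deleteEdges (n := 3) (chromaticNumber_eq_four hm)
    ((almostTripartiteGraph m).mem_edgeSet.2 (adj_zero_one (by omega)))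
    (colorable_three_deleteEdges (by omega))

end almostTripartiteGraph

open scoped Classical in
/-- For each `r ∈ {6, 8, 10}` there is a connected `r`-regular graph
with chromatic number 4 and chromatic-stability index 1. -/
theorem exists_regular_chi_four_esChi_one :
    ∀ r ∈ ({6, 8, 10} : Set ℕ), ∃ (n : ℕ) (G : SimpleGraph (Fin n)),
      G.Connected ∧ G.IsRegularOfDegree r ∧ G.chromaticNumber = 4 ∧ esChi G = 1 := by
  intro r hr
  obtain ⟨m, hm, rfl⟩ : ∃ m ∈ ({3, 4, 5} : Finset ℕ), r = 2 * m := by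
    rcases hr with rfl | rfl | rfl <;> simp
  have h3 : 3 ≤ m := by simp only [Finset.mem_insert, Finset.mem_singleton] at hm; omega
  exact ⟨3 * m + 1, almostTripartiteGraph m, almostTripartiteGraph.connected (by omega),
    (almostTripartiteGraph.isRegularOfDegree hm).congr_locallyFinite,
    almostTripartiteGraph.chromaticNumber_eq_four h3, almostTripartiteGraph.esChi_eq_one h3⟩
end

section
/- Let G be a finite simple graph of order n with r = χ(G), where n ≡ r − 1 (mod r), and suppose es_χ(G) = ⌊n/r⌋·⌊n/r + 1⌋. Then for every proper coloring of G with exactly r color classes C_1, …, C_r ordered so that |C_1| ≤ ⋯ ≤ |C_r|, and for every i with 2 ≤ i ≤ r, the subgraph of G induced by C_1 ∪ C_i is a complete bipartite graph with bipartition (C_1, C_i). -/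
open Function

/-!
Deleting the edges between two colour classes `C_j, C_k` of a `χ(G)`-colouring lets the two
classes merge, so `es_χ(G) ≤ e(C_j, C_k) ≤ |C_j| |C_k|` for all `j ≠ k`. Write `n = r q + r - 1`
and `a = |C_1|`. Summing `q (q + 1) ≤ a |C_k|` over `k ≠ 1` gives
`(r - 1) q (q + 1) ≤ a (n - a)`, and together with `a ≤ q` (the smallest class is at most the
average) this forces `a = q`. Then every other class has at least, hence exactly, `q + 1`
vertices, so `e(C_1, C_i) ≥ es_χ(G) = |C_1| |C_i|`: all edges between `C_1` and `C_i` are present.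
-/

open Finset

theorem Nat.eq_of_le_of_sub_one_mul_le_mul {a T r q : ℕ} (hr : 2 ≤ r)
    (haT : a + T + 1 = r * (q + 1)) (ha : a ≤ q) (hprod : (r - 1) * (q * (q + 1)) ≤ a * T) :
    a = q := by
  obtain ⟨m, rfl⟩ : ∃ m, r = m + 2 := ⟨r - 2, by omega⟩
  obtain ⟨d, rfl⟩ | rfl : (∃ d, q = a + d + 1) ∨ a = q := by
    rcases ha.lt_or_eq with h | h
    · exact .inl ⟨q - a - 1, by omega⟩
    · exact .inr h
  · rw [show m + 2 - 1 = m + 1 by omega] at hprod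
    have hT : a + d + 1 < T := by nlinarith
    -- over ℤ, `a T - (r - 1) q (q + 1) = (a - q) (T - q)` by `haT`, and here `a < q < T`
    nlinarith [Nat.mul_lt_mul_of_pos_left hT (Nat.succ_pos d)]
  · rfl

section ClassSizes

variable {ι : Type*} [Fintype ι] {s : ι → ℕ} {i₀ : ι} {q : ℕ}

theorem apply_le_of_sum_add_one_eq (hsum : ∑ k, s k + 1 = Fintype.card ι * (q + 1))
    (hmin : ∀ k, s i₀ ≤ s k) : s i₀ ≤ q := by
  by_contra! h
  have := card_nsmul_le_sum univ (fun k => s k) (q + 1) fun k _ => h.trans_le (hmin k)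
  rw [card_univ, smul_eq_mul, ← hsum] at this
  omega

variable [DecidableEq ι]

theorem apply_eq_of_sum_add_one_eq [Nontrivial ι]
    (hsum : ∑ k, s k + 1 = Fintype.card ι * (q + 1)) (hmin : ∀ k, s i₀ ≤ s k)
    (hprod : ∀ k ≠ i₀, q * (q + 1) ≤ s i₀ * s k) : s i₀ = q := by
  have hsplit : s i₀ + ∑ k ∈ univ.erase i₀, s k = ∑ k, s k := add_sum_erase _ _ (mem_univ _)
  have hothers : (Fintype.card ι - 1) * (q * (q + 1)) ≤ s i₀ * ∑ k ∈ univ.erase i₀, s k := by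
    rw [mul_sum]
    simpa [card_erase_of_mem] using
      card_nsmul_le_sum (univ.erase i₀) _ _ fun k hk => hprod k (ne_of_mem_erase hk)
  exact Nat.eq_of_le_of_sub_one_mul_le_mul Fintype.one_lt_card (by omega)
    (apply_le_of_sum_add_one_eq hsum hmin) hothers

theorem apply_eq_succ_of_sum_add_one_eq [Nontrivial ι]
    (hsum : ∑ k, s k + 1 = Fintype.card ι * (q + 1)) (hmin : ∀ k, s i₀ ≤ s k)
    (hprod : ∀ k ≠ i₀, q * (q + 1) ≤ s i₀ * s k) (hpos : 0 < s i₀) {k : ι} (hk : k ≠ i₀) :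
    s k = q + 1 := by
  have hmin_eq := apply_eq_of_sum_add_one_eq hsum hmin hprod
  have hge : ∀ k ∈ univ.erase i₀, q + 1 ≤ s k := fun k hk =>
    Nat.le_of_mul_le_mul_left (hmin_eq ▸ hprod k (ne_of_mem_erase hk)) (hmin_eq ▸ hpos)
  have hsplit : s i₀ + ∑ k ∈ univ.erase i₀, s k = ∑ k, s k := add_sum_erase _ _ (mem_univ _)
  have hothers : ∑ _k ∈ univ.erase i₀, (q + 1) = ∑ k ∈ univ.erase i₀, s k := by
    rw [sum_const, card_erase_of_mem (mem_univ _), card_univ, smul_eq_mul,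
      Nat.sub_one_mul]
    omega
  exact ((sum_eq_sum_iff_of_le hge).1 hothers k (mem_erase.2 ⟨hk, mem_univ _⟩)).symm

end ClassSizes

section ColorClasses

variable {V α : Type*} [Fintype V] {G : SimpleGraph V}

@[simp]
theorem mem_classOf (c : G.Coloring α) (i : α) (v : V) : v ∈ classOf c i ↔ c v = i := by
  classical
  simp [classOf]

theorem disjoint_classOf (c : G.Coloring α) {i j : α} (hij : i ≠ j) :
    Disjoint (classOf c i) (classOf c j) :=
  disjoint_left.2 fun v hi hj =>
    hij (((mem_classOf c i v).1 hi).symm.trans ((mem_classOf c j v).1 hj))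

theorem sum_card_classOf [Fintype α] (c : G.Coloring α) :
    ∑ k, #(classOf c k) = Fintype.card V := by
  classical
  rw [← card_univ,
    card_eq_sum_card_fiberwise (f := c) (t := univ) fun _ _ => mem_coe.2 (mem_univ _)]
  congr!

theorem card_classOf_pos {c : G.Coloring α} (hc : Surjective c) (i : α) : 0 < #(classOf c i) :=
  card_pos.2 <| (hc i).imp fun v hv => (mem_classOf c i v).2 hv

theorem adj_iff_of_forall_adj (c : G.Coloring α) {i j : α}
    (hcomplete : ∀ x ∈ classOf c i, ∀ y ∈ classOf c j, G.Adj x y) {u v : V}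
    (hu : u ∈ classOf c i ∨ u ∈ classOf c j) (hv : v ∈ classOf c i ∨ v ∈ classOf c j) :
    G.Adj u v ↔ (u ∈ classOf c i ∧ v ∈ classOf c j) ∨ (u ∈ classOf c j ∧ v ∈ classOf c i) := by
  refine ⟨fun hadj => ?_, ?_⟩
  · have hne := c.valid hadj
    simp only [mem_classOf] at hu hv ⊢
    grind
  · rintro (⟨hu, hv⟩ | ⟨hu, hv⟩)
    · exact hcomplete u hu v hv
    · exact (hcomplete v hv u hu).symm

end ColorClasses

section EdgesBetween

variable {V : Type*} {G : SimpleGraph V} {A B : Finset V}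

open scoped Classical in
noncomputable def edgesBetween (G : SimpleGraph V) (A B : Finset V) : Finset (Sym2 V) :=
  ((A ×ˢ B).filter fun p => G.Adj p.1 p.2).image fun p => s(p.1, p.2)

theorem mk_mem_edgesBetween {x y : V} (hx : x ∈ A) (hy : y ∈ B) (hxy : G.Adj x y) :
    s(x, y) ∈ edgesBetween G A B := by
  classical
  exact mem_image.2 ⟨(x, y), mem_filter.2 ⟨mem_product.2 ⟨hx, hy⟩, hxy⟩, rfl⟩

theorem coe_edgesBetween_subset_edgeSet : ↑(edgesBetween G A B) ⊆ G.edgeSet := by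
  classical
  intro e he
  obtain ⟨p, hp, rfl⟩ := mem_image.1 (mem_coe.1 he)
  exact (mem_filter.1 hp).2

variable [Fintype V]

theorem eCC_le_card_mul_card (A B : Finset V) : eCC G A B ≤ #A * #B := by
  classical
  exact (card_filter_le _ _).trans_eq (card_product A B)

theorem adj_of_card_mul_card_le_eCC (h : #A * #B ≤ eCC G A B) {x y : V} (hx : x ∈ A)
    (hy : y ∈ B) : G.Adj x y := by
  classical
  have hall := card_filter_eq_iff.1 <|
    (card_filter_le _ _).antisymm ((card_product A B).symm ▸ h)
  exact hall (x, y) (mem_product.2 ⟨hx, hy⟩)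

theorem card_edgesBetween (hAB : Disjoint A B) : #(edgesBetween G A B) = eCC G A B := by
  classical
  refine card_image_of_injOn fun p hp p' hp' hpp' => ?_
  have hp := mem_product.1 (mem_filter.1 hp).1
  have hp' := mem_product.1 (mem_filter.1 hp').1
  rcases Sym2.mk_eq_mk_iff.1 hpp' with h | h
  · exact h
  · exact absurd (h ▸ hp.1 : p'.swap.1 ∈ A) (disjoint_left.1 hAB.symm hp'.2)

theorem colorable_deleteEdges_edgesBetween {α : Type*} [Fintype α] (c : G.Coloring α)
    {i j : α} (hij : i ≠ j) :
    (G.deleteEdges ↑(edgesBetween G (classOf c i) (classOf c j))).Colorable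
      (Fintype.card α - 1) := by
  classical
  -- recolour the class of `i` with `j`; no remaining edge joins the two classes
  have hbetween : ∀ {u v}, (G.deleteEdges ↑(edgesBetween G (classOf c i) (classOf c j))).Adj u v →
      c u = i → c v ≠ j := fun huv hu hv => by
    rw [SimpleGraph.deleteEdges_adj] at huv
    exact huv.2 (mk_mem_edgesBetween ((mem_classOf c i _).2 hu) ((mem_classOf c j _).2 hv) huv.1)
  let C : (G.deleteEdges ↑(edgesBetween G (classOf c i) (classOf c j))).Coloring
      {x : α // x ≠ i} :=
    SimpleGraph.Coloring.mk (fun v => if h : c v = i then ⟨j, hij.symm⟩ else ⟨c v, h⟩)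
      fun {u v} huv => by
        have hne : c u ≠ c v := c.valid huv.1
        have h₁ := hbetween huv
        have h₂ := hbetween huv.symm
        split_ifs <;> simp only [ne_eq, Subtype.mk.injEq] <;> grind
  simpa [Fintype.card_subtype_compl] using C.colorable

end EdgesBetween

section ChromaticStability

variable {V : Type*} [Fintype V] {G : SimpleGraph V}

theorem esChi_le_card {F : Finset (Sym2 V)} (hF : ↑F ⊆ G.edgeSet)
    (hlt : (G.deleteEdges ↑F).chromaticNumber < G.chromaticNumber) : esChi G ≤ #F :=
  Nat.sInf_le ⟨F, hF, rfl, hlt⟩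

theorem esChi_le_eCC {α : Type*} [Fintype α] (hχ : G.chromaticNumber = Fintype.card α)
    (c : G.Coloring α) {i j : α} (hij : i ≠ j) :
    esChi G ≤ eCC G (classOf c i) (classOf c j) := by
  rw [← card_edgesBetween (disjoint_classOf c hij)]
  refine esChi_le_card coe_edgesBetween_subset_edgeSet ?_
  have hpos : 0 < Fintype.card α := Fintype.card_pos_iff.2 ⟨i⟩
  calc _ ≤ ((Fintype.card α - 1 : ℕ) : ℕ∞) :=
        (colorable_deleteEdges_edgesBetween c hij).chromaticNumber_le
    _ < G.chromaticNumber := by rw [hχ]; exact_mod_cast Nat.sub_one_lt hpos.ne'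

end ChromaticStability

/-- If `n ≡ r − 1 (mod r)` where `r = χ(G)` and
`es_χ(G) = ⌊n/r⌋·⌊n/r + 1⌋`, then in every proper coloring of `G` with exactly `r`
color classes ordered by nondecreasing size, for each `2 ≤ i ≤ r` the subgraph
induced by `C₁ ∪ C_i` is a complete bipartite graph with bipartition `(C₁, C_i)`. -/
theorem extremal_coloring_complete_bipartite {V : Type*} [Fintype V]
    (G : SimpleGraph V) (r : ℕ) (hchi : G.chromaticNumber = r)
    (hmod : Fintype.card V % r = r - 1)
    (hes : esChi G = (Fintype.card V / r) * (Fintype.card V / r + 1)) :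
    ∀ c : G.Coloring (Fin r), Surjective c →
      (∀ i j : Fin r, i ≤ j → (classOf c i).card ≤ (classOf c j).card) →
      ∀ i₁ i : Fin r, i₁.val = 0 → i.val ≠ 0 →
        ∀ u v : V, (u ∈ classOf c i₁ ∨ u ∈ classOf c i) →
          (v ∈ classOf c i₁ ∨ v ∈ classOf c i) →
          (G.Adj u v ↔
            ((u ∈ classOf c i₁ ∧ v ∈ classOf c i) ∨
             (u ∈ classOf c i ∧ v ∈ classOf c i₁))) := by
  intro c hsurj hmono i₁ i h1 hi u v hu hv
  have hdiv := Nat.div_add_mod (Fintype.card V) r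
  set q := Fintype.card V / r
  have hne : i ≠ i₁ := fun h => hi (h ▸ h1)
  have : Nontrivial (Fin r) := nontrivial_of_ne i i₁ hne
  have hχ : G.chromaticNumber = Fintype.card (Fin r) := by rw [hchi, Fintype.card_fin]
  have hsum : ∑ k, #(classOf c k) + 1 = Fintype.card (Fin r) * (q + 1) := by
    rw [sum_card_classOf, Fintype.card_fin, mul_add_one]
    omega
  have hmin : ∀ k, #(classOf c i₁) ≤ #(classOf c k) := fun k =>
    hmono i₁ k (Fin.le_def.2 (h1 ▸ Nat.zero_le _))
  have hprod : ∀ k ≠ i₁, q * (q + 1) ≤ #(classOf c i₁) * #(classOf c k) := fun k hk =>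
    hes ▸ (esChi_le_eCC hχ c hk.symm).trans (eCC_le_card_mul_card _ _)
  have hcard₁ : #(classOf c i₁) = q :=
    apply_eq_of_sum_add_one_eq (s := fun k => #(classOf c k)) hsum hmin hprod
  have hcard : #(classOf c i) = q + 1 :=
    apply_eq_succ_of_sum_add_one_eq (s := fun k => #(classOf c k)) hsum hmin hprod
      (card_classOf_pos hsurj i₁) hne
  have hcomplete : ∀ x ∈ classOf c i₁, ∀ y ∈ classOf c i, G.Adj x y := fun x hx y hy =>
    adj_of_card_mul_card_le_eCC (G := G)
      (by rw [hcard₁, hcard, ← hes]; exact esChi_le_eCC hχ c hne.symm) hx hy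
  exact adj_iff_of_forall_adj c hcomplete hu hv
end
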